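/- Let U, H be Hopf algebras, R : H ⊗ U → U ⊗ H a normal, multiplicative coalgebra map, and B a unital algebra. Let α : U → B be an algebra homomorphism and η : H → B a partial representation of H such that η(h)α(u) = α(u^R)η(h^R) for all u ∈ U, h ∈ H. Define the linear map π : U ⊗ H → B by π(u ⊗ h) = α(u)η(h). Then for all u, v ∈ U and h, k ∈ H: π(v ⊗ k)·π(S_U(u₍₁₎)^R ⊗ S_H(h₍₁₎)^R)·π(u₍₂₎ ⊗ h₍₂₎) = π(v·S_U(u₍₁₎)^{Rr} ⊗ k^r·S_H(h₍₁₎)^R)·π(u₍₂₎ ⊗ h₍₂₎), which is axiom (PR4) of a partial representation for the smash product Hopf algebra U #_R H evaluated on elements v ⊗ k and u ⊗ h. -/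

import Mathlib

open TensorProduct

noncomputable section

variable {k : Type*} [Field k]
variable {U : Type*} [Ring U] [HopfAlgebra k U]
variable {H : Type*} [Ring H] [HopfAlgebra k H]

/-- The tensor product comultiplication on `A ⊗ B`:
`a ⊗ b ↦ (a₍₁₎ ⊗ b₍₁₎) ⊗ (a₍₂₎ ⊗ b₍₂₎)`. -/
def comulTP (k A B : Type*) [Field k] [Ring A] [HopfAlgebra k A] [Ring B] [HopfAlgebra k B] :
    A ⊗[k] B →ₗ[k] (A ⊗[k] B) ⊗[k] (A ⊗[k] B) :=
  (TensorProduct.tensorTensorTensorComm k A A B B).toLinearMap ∘ₗ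
    TensorProduct.map (Coalgebra.comul (R := k)) (Coalgebra.comul (R := k))

/-- The tensor product counit on `A ⊗ B`: `a ⊗ b ↦ ε(a)ε(b)`. -/
def counitTP (k A B : Type*) [Field k] [Ring A] [HopfAlgebra k A] [Ring B] [HopfAlgebra k B] :
    A ⊗[k] B →ₗ[k] k :=
  (TensorProduct.lid k k).toLinearMap ∘ₗ
    TensorProduct.map (Coalgebra.counit (R := k)) (Coalgebra.counit (R := k))

/-- `R` is left normal: `R(h ⊗ 1_U) = 1_U ⊗ h`. -/
def LeftNormal (R : H ⊗[k] U →ₗ[k] U ⊗[k] H) : Prop :=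
  ∀ h : H, R (h ⊗ₜ[k] (1 : U)) = (1 : U) ⊗ₜ[k] h

/-- `R` is right normal: `R(1_H ⊗ u) = u ⊗ 1_H`. -/
def RightNormal (R : H ⊗[k] U →ₗ[k] U ⊗[k] H) : Prop :=
  ∀ u : U, R ((1 : H) ⊗ₜ[k] u) = u ⊗ₜ[k] (1 : H)

/-- `R` is left multiplicative: `u^R ⊗ (hh')^R = (u^R)^r ⊗ h^r(h')^R`,
as an equality of linear maps `(H ⊗ H) ⊗ U → U ⊗ H`. -/
def LeftMult (R : H ⊗[k] U →ₗ[k] U ⊗[k] H) : Prop :=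
  R ∘ₗ TensorProduct.map (LinearMap.mul' k H) (LinearMap.id : U →ₗ[k] U) =
    TensorProduct.map (LinearMap.id : U →ₗ[k] U) (LinearMap.mul' k H) ∘ₗ
      (TensorProduct.assoc k U H H).toLinearMap ∘ₗ
      TensorProduct.map R (LinearMap.id : H →ₗ[k] H) ∘ₗ
      (TensorProduct.assoc k H U H).symm.toLinearMap ∘ₗ
      TensorProduct.map (LinearMap.id : H →ₗ[k] H) R ∘ₗ
      (TensorProduct.assoc k H H U).toLinearMap

/-- `R` is right multiplicative: `(uu')^R ⊗ h^R = u^R(u')^r ⊗ (h^R)^r`,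
as an equality of linear maps `H ⊗ (U ⊗ U) → U ⊗ H`. -/
def RightMult (R : H ⊗[k] U →ₗ[k] U ⊗[k] H) : Prop :=
  R ∘ₗ TensorProduct.map (LinearMap.id : H →ₗ[k] H) (LinearMap.mul' k U) =
    TensorProduct.map (LinearMap.mul' k U) (LinearMap.id : H →ₗ[k] H) ∘ₗ
      (TensorProduct.assoc k U U H).symm.toLinearMap ∘ₗ
      TensorProduct.map (LinearMap.id : U →ₗ[k] U) R ∘ₗ
      (TensorProduct.assoc k U H U).toLinearMap ∘ₗ
      TensorProduct.map R (LinearMap.id : U →ₗ[k] U) ∘ₗ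
      (TensorProduct.assoc k H U U).symm.toLinearMap

/-- `R` is a coalgebra map for the tensor product coalgebra structures. -/
def IsCoalgMap (R : H ⊗[k] U →ₗ[k] U ⊗[k] H) : Prop :=
  counitTP k U H ∘ₗ R = counitTP k H U ∧
    comulTP k U H ∘ₗ R = TensorProduct.map R R ∘ₗ comulTP k H U

/-- The left action `h ⊗ u ↦ h ▷ u = ε_H(h^R)u^R`, as a linear map `H ⊗ U → U`. -/
def lact (R : H ⊗[k] U →ₗ[k] U ⊗[k] H) : H ⊗[k] U →ₗ[k] U :=
  (TensorProduct.rid k U).toLinearMap ∘ₗ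
    TensorProduct.map (LinearMap.id : U →ₗ[k] U) (Coalgebra.counit (R := k)) ∘ₗ R

/-- The right action `h ⊗ u ↦ h ◁ u = ε_U(u^R)h^R`, as a linear map `H ⊗ U → H`. -/
def ract (R : H ⊗[k] U →ₗ[k] U ⊗[k] H) : H ⊗[k] U →ₗ[k] H :=
  (TensorProduct.lid k H).toLinearMap ∘ₗ
    TensorProduct.map (Coalgebra.counit (R := k)) (LinearMap.id : H →ₗ[k] H) ∘ₗ R

variable {B : Type*} [Ring B] [Algebra k B]

/-- The map `h ↦ ε^η_h = η(h₍₁₎)η(S(h₍₂₎))`, as a linear map `H →ₗ[k] B`. -/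
def epsPi (η : H →ₗ[k] B) : H →ₗ[k] B :=
  LinearMap.mul' k B ∘ₗ
    TensorProduct.map η (η ∘ₗ HopfAlgebra.antipode (R := k)) ∘ₗ Coalgebra.comul

/-- A partial representation of the Hopf algebra `H` on a unital algebra `B`. -/
structure IsPartialRep (η : H →ₗ[k] B) : Prop where
  map_one : η 1 = 1
  pr2 : ∀ h : H,
    LinearMap.mulLeft k (η h) ∘ₗ epsPi η =
      LinearMap.mul' k B ∘ₗ
        TensorProduct.map (η ∘ₗ LinearMap.mulLeft k h)
          (η ∘ₗ HopfAlgebra.antipode (R := k)) ∘ₗ Coalgebra.comul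
  pr3 : ∀ g : H,
    LinearMap.mulRight k (η g) ∘ₗ epsPi η =
      LinearMap.mul' k B ∘ₗ
        TensorProduct.map η
          (η ∘ₗ LinearMap.mulRight k g ∘ₗ HopfAlgebra.antipode (R := k)) ∘ₗ Coalgebra.comul

/-- The linear map `π : U ⊗ H → B`, `π(u ⊗ h) = α(u)η(h)`. -/
def piMap (α : U →ₐ[k] B) (η : H →ₗ[k] B) : U ⊗[k] H →ₗ[k] B :=
  LinearMap.mul' k B ∘ₗ TensorProduct.map α.toLinearMap η

/-- Left multiplication by `v ⊗ g` in the smash product `U #_R H`: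
`x ⊗ y ↦ v·x^r ⊗ g^r·y` (where `r` is applied to `g ⊗ x`). -/
def smashMulLeft (R : H ⊗[k] U →ₗ[k] U ⊗[k] H) (v : U) (g : H) :
    U ⊗[k] H →ₗ[k] U ⊗[k] H :=
  TensorProduct.map (LinearMap.mulLeft k v) (LinearMap.mul' k H) ∘ₗ
    (TensorProduct.assoc k U H H).toLinearMap ∘ₗ
    TensorProduct.map (R ∘ₗ TensorProduct.mk k H U g) (LinearMap.id : H →ₗ[k] H)

/-!
Evaluate both sides on `h ⊗ u`. Compatibility of `α` and `η` says `π(t)α(d) = π(t·(d ⊗ 1))` in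
`U #_R H`, and right multiplicativity of `R` turns `R(x ⊗ S u₍₁₎)·(u₍₂₎ ⊗ 1)` into
`R(x ⊗ S(u₍₁₎)u₍₂₎) = ε(u)·(1 ⊗ x)`. Left multiplication by `v ⊗ g` commutes with right
multiplication (associativity of `U #_R H`, from the two multiplicativity conditions), so the
`U`-legs collapse on both sides, leaving `ε(u)·α(v)η(g)η(S h₍₁₎)η(h₍₂₎)` and
`ε(u)·α(v)η(g S h₍₁₎)η(h₍₂₎)`. These agree by (PR4) for `η`, which follows from (PR2) and (PR3)
through `η(m) = η(m₍₁₎)η(S m₍₂₎)η(m₍₃₎)`.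
-/

open Coalgebra HopfAlgebra

section Sweedler

variable {R C M : Type*} [CommSemiring R] [AddCommMonoid M] [Module R M] {ι : Type*}
  {κ Λ : ι → Type*}

lemma Coalgebra.sum_apply_tmul_tmul_eq [AddCommMonoid C] [Module R C] [Coalgebra R C]
    (Φ : C ⊗[R] (C ⊗[R] C) →ₗ[R] M) {a : C}
    (r : Repr R a ι) (a₁ : ∀ i, Repr R (r.left i) (κ i)) (a₂ : ∀ i, Repr R (r.right i) (Λ i)) :
    ∑ i ∈ r.index, ∑ j ∈ (a₁ i).index, Φ ((a₁ i).left j ⊗ₜ ((a₁ i).right j ⊗ₜ r.right i)) =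
      ∑ i ∈ r.index, ∑ j ∈ (a₂ i).index, Φ (r.left i ⊗ₜ ((a₂ i).left j ⊗ₜ (a₂ i).right j)) := by
  simpa only [map_sum] using congrArg Φ (sum_tmul_tmul_eq r a₁ a₂)

lemma Coalgebra.sum_smul_counit [AddCommMonoid C] [Module R C] [Coalgebra R C] {a : C}
    (r : Repr R a ι) : ∑ i ∈ r.index, counit (R := R) (r.right i) • r.left i = a := by
  simpa only [map_sum, _root_.TensorProduct.rid_tmul, one_smul] using
    congrArg (_root_.TensorProduct.rid R C) (sum_tmul_counit_eq r)

lemma HopfAlgebra.sum_sum_antipode_mul_tmul [Semiring C] [HopfAlgebra R C] {a : C}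
    (r : Repr R a ι) (rb : ∀ i, Repr R (r.right i) (κ i)) :
    ∑ i ∈ r.index, ∑ j ∈ (rb i).index,
      (antipode R (r.left i) * (rb i).left j) ⊗ₜ[R] (rb i).right j = (1 : C) ⊗ₜ[R] a := by
  have coassoc := congrArg (TensorProduct.map (LinearMap.mul' R C ∘ₗ
      TensorProduct.map (antipode R) LinearMap.id) LinearMap.id ∘ₗ
      (_root_.TensorProduct.assoc R C C C).symm.toLinearMap)
    (sum_tmul_tmul_eq r (fun i => ℛ R (r.left i)) rb)
  simp only [map_sum, LinearMap.comp_apply, LinearEquiv.coe_coe,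
    _root_.TensorProduct.assoc_symm_tmul, map_tmul, LinearMap.mul'_apply,
    LinearMap.id_apply] at coassoc
  rw [← coassoc]
  simp_rw [← TensorProduct.sum_tmul, sum_antipode_mul_eq_smul, TensorProduct.smul_tmul,
    ← TensorProduct.tmul_sum, sum_counit_smul]

end Sweedler

lemma comulTP_tmul {A C : Type*} [Ring A] [HopfAlgebra k A] [Ring C] [HopfAlgebra k C]
    {ι κ : Type*} {a : A} {c : C} (r : Repr k a ι) (s : Repr k c κ) :
    comulTP k A C (a ⊗ₜ c) = ∑ i ∈ r.index, ∑ j ∈ s.index,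
      (r.left i ⊗ₜ s.left j) ⊗ₜ (r.right i ⊗ₜ s.right j) := by
  simp only [comulTP, LinearMap.comp_apply, map_tmul, ← r.eq, ← s.eq, TensorProduct.sum_tmul,
    TensorProduct.tmul_sum, map_sum, LinearEquiv.coe_coe, tensorTensorTensorComm_tmul]
  exact Finset.sum_comm

namespace IsPartialRep

variable {η : H →ₗ[k] B} {ι : Type*}

lemma mul_epsPi (hη : IsPartialRep η) (x : H) {m : H} (r : Repr k m ι) :
    η x * epsPi η m = ∑ i ∈ r.index, η (x * r.left i) * η (antipode k (r.right i)) := by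
  simpa only [LinearMap.comp_apply, LinearMap.mulLeft_apply, ← r.eq, map_sum, map_tmul,
    LinearMap.mul'_apply] using LinearMap.congr_fun (hη.pr2 x) m

lemma epsPi_mul (hη : IsPartialRep η) {m : H} (r : Repr k m ι) (y : H) :
    epsPi η m * η y = ∑ i ∈ r.index, η (r.left i) * η (antipode k (r.right i) * y) := by
  simpa only [LinearMap.comp_apply, LinearMap.mulRight_apply, ← r.eq, map_sum, map_tmul,
    LinearMap.mul'_apply] using LinearMap.congr_fun (hη.pr3 y) m

lemma sum_epsPi_mul (hη : IsPartialRep η) {m : H} (r : Repr k m ι) :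
    ∑ i ∈ r.index, epsPi η (r.left i) * η (r.right i) = η m := by
  calc ∑ i ∈ r.index, epsPi η (r.left i) * η (r.right i)
      = ∑ i ∈ r.index, ∑ j ∈ (ℛ k (r.left i)).index,
          η ((ℛ k (r.left i)).left j) * η (antipode k ((ℛ k (r.left i)).right j) * r.right i) :=
        Finset.sum_congr rfl fun i _ => hη.epsPi_mul _ _
    _ = ∑ i ∈ r.index, ∑ j ∈ (ℛ k (r.right i)).index,
          η (r.left i) * η (antipode k ((ℛ k (r.right i)).left j) * (ℛ k (r.right i)).right j) :=
        sum_apply_tmul_tmul_eq (LinearMap.mul' k B ∘ₗ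
          TensorProduct.map η (η ∘ₗ LinearMap.mul' k H ∘ₗ LinearMap.rTensor H (antipode k))) _ _ _
    _ = η m := by
        simp_rw [← Finset.mul_sum, ← map_sum, sum_antipode_mul_eq_smul, map_smul, hη.map_one,
          mul_smul_comm, mul_one, ← map_smul, ← map_sum, sum_smul_counit]

lemma mul_sum_antipode_mul (hη : IsPartialRep η) (g : H) {h : H} (r : Repr k h ι) :
    η g * ∑ i ∈ r.index, η (antipode k (r.left i)) * η (r.right i) =
      ∑ i ∈ r.index, η (g * antipode k (r.left i)) * η (r.right i) := by
  set rb := fun i => ℛ k (r.right i)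
  set rc := fun i j => ℛ k ((rb i).left j)
  set rd := fun i j => ℛ k ((rb i).right j)
  set Φ : H ⊗[k] (H ⊗[k] H) →ₗ[k] B := LinearMap.mul' k B ∘ₗ
    TensorProduct.map (LinearMap.mul' k B ∘ₗ
      TensorProduct.map (η ∘ₗ LinearMap.mulLeft k g) (η ∘ₗ antipode k)) η ∘ₗ
    (_root_.TensorProduct.assoc k H H H).symm.toLinearMap with hΦ
  have hΦ_tmul : ∀ x y z, Φ (x ⊗ₜ (y ⊗ₜ z)) = η (g * x) * η (antipode k y) * η z := by
    intro x y z; simp [hΦ, LinearMap.mul'_apply]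
  symm
  calc ∑ i ∈ r.index, η (g * antipode k (r.left i)) * η (r.right i)
      = ∑ i ∈ r.index, ∑ j ∈ (rb i).index, ∑ l ∈ (rc i j).index,
          Φ ((antipode k (r.left i) * (rc i j).left l) ⊗ₜ ((rc i j).right l ⊗ₜ (rb i).right j)) := by
        refine Finset.sum_congr rfl fun i _ => ?_
        rw [← hη.sum_epsPi_mul (rb i), Finset.mul_sum]
        refine Finset.sum_congr rfl fun j _ => ?_
        rw [← mul_assoc, hη.mul_epsPi _ (rc i j), Finset.sum_mul]
        simp only [hΦ_tmul, mul_assoc]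
    _ = ∑ i ∈ r.index, ∑ j ∈ (rb i).index, ∑ l ∈ (rd i j).index,
          Φ ((antipode k (r.left i) * (rb i).left j) ⊗ₜ ((rd i j).left l ⊗ₜ (rd i j).right l)) :=
        Finset.sum_congr rfl fun i _ => sum_apply_tmul_tmul_eq
          (Φ ∘ₗ TensorProduct.map (LinearMap.mulLeft k (antipode k (r.left i))) LinearMap.id)
          (rb i) (rc i) (rd i)
    _ = ∑ i ∈ r.index, ∑ j ∈ (rb i).index, (Φ ∘ₗ LinearMap.lTensor H comul)
          ((antipode k (r.left i) * (rb i).left j) ⊗ₜ (rb i).right j) := by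
        simp only [← map_sum, ← TensorProduct.tmul_sum, (rd _ _).eq, LinearMap.comp_apply,
          LinearMap.lTensor_tmul]
    _ = (Φ ∘ₗ LinearMap.lTensor H comul) (1 ⊗ₜ h) := by
        rw [← sum_sum_antipode_mul_tmul r rb]; simp only [map_sum]
    _ = η g * ∑ i ∈ r.index, η (antipode k (r.left i)) * η (r.right i) := by
        simp only [LinearMap.comp_apply, LinearMap.lTensor_tmul, ← r.eq, TensorProduct.tmul_sum,
          map_sum, hΦ_tmul, mul_one, Finset.mul_sum, mul_assoc]

end IsPartialRep

section Smash

variable (R : H ⊗[k] U →ₗ[k] U ⊗[k] H)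

/-- The multiplication `(a ⊗ b)(c ⊗ d) = a c^R ⊗ b^R d` of the smash product `U #_R H`. -/
def smashMul : U ⊗[k] H →ₗ[k] U ⊗[k] H →ₗ[k] U ⊗[k] H :=
  TensorProduct.curry <|
    TensorProduct.map (LinearMap.mul' k U) (LinearMap.mul' k H) ∘ₗ
      (_root_.TensorProduct.assoc k U U (H ⊗[k] H)).symm.toLinearMap ∘ₗ
      LinearMap.lTensor U ((_root_.TensorProduct.assoc k U H H).toLinearMap ∘ₗ
        LinearMap.rTensor H R ∘ₗ (_root_.TensorProduct.assoc k H U H).symm.toLinearMap) ∘ₗ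
      (_root_.TensorProduct.assoc k U H (U ⊗[k] H)).toLinearMap

lemma smashMul_tmul_tmul (a : U) (b : H) (c : U) (d : H) :
    smashMul R (a ⊗ₜ b) (c ⊗ₜ d) =
      TensorProduct.map (LinearMap.mulLeft k a) (LinearMap.mulRight k d) (R (b ⊗ₜ c)) := by
  simp only [smashMul, TensorProduct.curry_apply, LinearMap.comp_apply, LinearEquiv.coe_coe,
    _root_.TensorProduct.assoc_tmul, _root_.TensorProduct.assoc_symm_tmul, LinearMap.lTensor_tmul,
    LinearMap.rTensor_tmul]
  induction R (b ⊗ₜ c) using TensorProduct.induction_on with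
  | zero => simp only [TensorProduct.zero_tmul, TensorProduct.tmul_zero, map_zero]
  | tmul x y => simp [LinearMap.mul'_apply]
  | add s t hs ht => simp only [TensorProduct.add_tmul, TensorProduct.tmul_add, map_add, hs, ht]

variable {R}

open LinearMap in
lemma smashMul_tmul_left (a : U) (b : H) (y : U ⊗[k] H) :
    smashMul R (a ⊗ₜ b) y = TensorProduct.map (mulLeft k a) id (smashMul R (1 ⊗ₜ b) y) := by
  induction y using TensorProduct.induction_on with
  | zero => simp only [map_zero]
  | tmul c d =>
    rw [smashMul_tmul_tmul, smashMul_tmul_tmul, TensorProduct.map_map, mulLeft_one, comp_id,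
      id_comp]
  | add s t hs ht => simp only [map_add, hs, ht]

open LinearMap in
lemma smashMul_tmul_right (x : U ⊗[k] H) (c : U) (d : H) :
    smashMul R x (c ⊗ₜ d) = TensorProduct.map id (mulRight k d) (smashMul R x (c ⊗ₜ 1)) := by
  induction x using TensorProduct.induction_on with
  | zero => simp only [map_zero, LinearMap.zero_apply]
  | tmul a b =>
    rw [smashMul_tmul_tmul, smashMul_tmul_tmul, TensorProduct.map_map, mulRight_one, comp_id,
      id_comp]
  | add s t hs ht => simp only [map_add, LinearMap.add_apply, hs, ht]

lemma LeftMult.apply_mul_tmul (hlm : LeftMult R) (y d : H) (e : U) :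
    R ((y * d) ⊗ₜ e) = smashMul R (1 ⊗ₜ y) (R (d ⊗ₜ e)) := by
  have h := LinearMap.congr_fun hlm ((y ⊗ₜ d) ⊗ₜ e)
  simp only [LinearMap.comp_apply, map_tmul, LinearMap.mul'_apply, LinearMap.id_apply,
    LinearEquiv.coe_coe, _root_.TensorProduct.assoc_tmul] at h
  rw [h]
  induction R (d ⊗ₜ e) using TensorProduct.induction_on with
  | zero => simp only [TensorProduct.tmul_zero, map_zero]
  | tmul p q =>
    simp only [_root_.TensorProduct.assoc_symm_tmul, map_tmul, LinearMap.id_apply,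
      smashMul_tmul_tmul]
    induction R (y ⊗ₜ p) using TensorProduct.induction_on with
    | zero => simp only [TensorProduct.zero_tmul, map_zero]
    | tmul m n => simp [LinearMap.mul'_apply]
    | add s t hs ht => simp only [TensorProduct.add_tmul, map_add, hs, ht]
  | add s t hs ht => simp only [TensorProduct.tmul_add, map_add, hs, ht]

lemma RightMult.apply_tmul_mul (hrm : RightMult R) (x : H) (c e : U) :
    R (x ⊗ₜ (c * e)) = smashMul R (R (x ⊗ₜ c)) (e ⊗ₜ 1) := by
  have h := LinearMap.congr_fun hrm (x ⊗ₜ (c ⊗ₜ e))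
  simp only [LinearMap.comp_apply, map_tmul, LinearMap.mul'_apply, LinearMap.id_apply,
    LinearEquiv.coe_coe, _root_.TensorProduct.assoc_symm_tmul] at h
  rw [h]
  induction R (x ⊗ₜ c) using TensorProduct.induction_on with
  | zero => simp only [TensorProduct.zero_tmul, map_zero, LinearMap.zero_apply]
  | tmul a b =>
    simp only [_root_.TensorProduct.assoc_tmul, map_tmul, LinearMap.id_apply,
      smashMul_tmul_tmul]
    induction R (b ⊗ₜ e) using TensorProduct.induction_on with
    | zero => simp only [TensorProduct.tmul_zero, map_zero]
    | tmul m n => simp [LinearMap.mul'_apply]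
    | add s t hs ht => simp only [TensorProduct.tmul_add, map_add, hs, ht]
  | add s t hs ht => simp only [TensorProduct.add_tmul, map_add, LinearMap.add_apply, hs, ht]

open LinearMap in
lemma smashMul_map_tmul (hlm : LeftMult R) (a : U) (d : H) (t : U ⊗[k] H) (e : U) (f : H) :
    smashMul R (TensorProduct.map (mulLeft k a) (mulRight k d) t) (e ⊗ₜ f) =
      TensorProduct.map (mulLeft k a) (mulRight k f) (smashMul R t (R (d ⊗ₜ e))) := by
  induction t using TensorProduct.induction_on with
  | zero => simp only [map_zero, LinearMap.zero_apply]
  | tmul x y =>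
    rw [map_tmul, mulLeft_apply, mulRight_apply, smashMul_tmul_tmul, hlm.apply_mul_tmul,
      smashMul_tmul_left x, TensorProduct.map_map, mulLeft_mul, comp_id]
  | add s t hs ht => simp only [map_add, LinearMap.add_apply, hs, ht]

open LinearMap in
lemma smashMul_tmul_map (hrm : RightMult R) (a : U) (b : H) (c : U) (f : H) (s : U ⊗[k] H) :
    smashMul R (a ⊗ₜ b) (TensorProduct.map (mulLeft k c) (mulRight k f) s) =
      TensorProduct.map (mulLeft k a) (mulRight k f) (smashMul R (R (b ⊗ₜ c)) s) := by
  induction s using TensorProduct.induction_on with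
  | zero => simp only [map_zero]
  | tmul p q =>
    rw [map_tmul, mulLeft_apply, mulRight_apply, smashMul_tmul_tmul, hrm.apply_tmul_mul,
      smashMul_tmul_right _ p q, TensorProduct.map_map, mulRight_mul, comp_id]
  | add s t hs ht => simp only [map_add, hs, ht]

theorem smashMul_assoc (hlm : LeftMult R) (hrm : RightMult R) (x y z : U ⊗[k] H) :
    smashMul R (smashMul R x y) z = smashMul R x (smashMul R y z) := by
  induction x using TensorProduct.induction_on with
  | zero => simp only [map_zero, LinearMap.zero_apply]
  | add x x' hx hx' => simp only [map_add, LinearMap.add_apply, hx, hx']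
  | tmul a b =>
  induction y using TensorProduct.induction_on with
  | zero => simp only [map_zero, LinearMap.zero_apply]
  | add y y' hy hy' => simp only [map_add, LinearMap.add_apply, hy, hy']
  | tmul c d =>
  induction z using TensorProduct.induction_on with
  | zero => simp only [map_zero]
  | add z z' hz hz' => simp only [map_add, hz, hz']
  | tmul e f =>
    rw [smashMul_tmul_tmul, smashMul_map_tmul hlm, smashMul_tmul_tmul, smashMul_tmul_map hrm]

lemma smashMulLeft_eq (v : U) (g : H) : smashMulLeft R v g = smashMul R (v ⊗ₜ g) := by
  refine TensorProduct.ext' fun x y => ?_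
  simp only [smashMulLeft, smashMul_tmul_tmul, LinearMap.comp_apply, map_tmul, LinearMap.id_apply,
    LinearEquiv.coe_coe, TensorProduct.mk_apply]
  induction R (g ⊗ₜ x) using TensorProduct.induction_on with
  | zero => simp only [TensorProduct.zero_tmul, map_zero]
  | tmul m n => simp [LinearMap.mul'_apply]
  | add s t hs ht => simp only [TensorProduct.add_tmul, map_add, hs, ht]

lemma smashMul_tmul_one_tmul (hln : LeftNormal R) (v : U) (g y : H) :
    smashMul R (v ⊗ₜ g) (1 ⊗ₜ y) = v ⊗ₜ (g * y) := by
  rw [smashMul_tmul_tmul, hln, map_tmul, LinearMap.mulLeft_apply, LinearMap.mulRight_apply, mul_one]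

variable {α : U →ₐ[k] B} {η : H →ₗ[k] B}

lemma piMap_tmul (x : U) (y : H) : piMap α η (x ⊗ₜ y) = α x * η y := by
  simp [piMap, LinearMap.mul'_apply]

lemma piMap_map_mulLeft (a : U) (t : U ⊗[k] H) :
    piMap α η (TensorProduct.map (LinearMap.mulLeft k a) LinearMap.id t) = α a * piMap α η t := by
  induction t using TensorProduct.induction_on with
  | zero => simp only [map_zero, mul_zero]
  | tmul x y => simp only [map_tmul, LinearMap.mulLeft_apply, LinearMap.id_apply, piMap_tmul,
      map_mul, mul_assoc]
  | add s t hs ht => simp only [map_add, mul_add, hs, ht]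

lemma piMap_smashMul_tmul_one
    (hcompat : LinearMap.mul' k B ∘ₗ TensorProduct.map η α.toLinearMap =
      LinearMap.mul' k B ∘ₗ TensorProduct.map α.toLinearMap η ∘ₗ R)
    (t : U ⊗[k] H) (d : U) :
    piMap α η (smashMul R t (d ⊗ₜ 1)) = piMap α η t * α d := by
  induction t using TensorProduct.induction_on with
  | zero => simp only [map_zero, LinearMap.zero_apply, zero_mul]
  | tmul a b =>
    have hbd : η b * α d = piMap α η (R (b ⊗ₜ d)) := by
      simpa [piMap, LinearMap.mul'_apply] using LinearMap.congr_fun hcompat (b ⊗ₜ d)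
    rw [smashMul_tmul_tmul, LinearMap.mulRight_one, piMap_map_mulLeft, piMap_tmul, mul_assoc, hbd]
  | add s t hs ht => simp only [map_add, LinearMap.add_apply, add_mul, hs, ht]

lemma sum_piMap_apply_antipode_mul (hln : LeftNormal R) (hrm : RightMult R)
    (hcompat : LinearMap.mul' k B ∘ₗ TensorProduct.map η α.toLinearMap =
      LinearMap.mul' k B ∘ₗ TensorProduct.map α.toLinearMap η ∘ₗ R)
    (c : U ⊗[k] H →ₗ[k] U ⊗[k] H)
    (hc : ∀ t d, c (smashMul R t (d ⊗ₜ 1)) = smashMul R (c t) (d ⊗ₜ 1))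
    (x : H) {ι : Type*} {u : U} (r : Repr k u ι) :
    ∑ j ∈ r.index, piMap α η (c (R (x ⊗ₜ antipode k (r.left j)))) * α (r.right j) =
      counit (R := k) u • piMap α η (c (1 ⊗ₜ x)) := by
  calc ∑ j ∈ r.index, piMap α η (c (R (x ⊗ₜ antipode k (r.left j)))) * α (r.right j)
      = ∑ j ∈ r.index, piMap α η (c (R (x ⊗ₜ (antipode k (r.left j) * r.right j)))) :=
        Finset.sum_congr rfl fun j _ => by
          rw [← piMap_smashMul_tmul_one hcompat, ← hc, hrm.apply_tmul_mul]
    _ = counit (R := k) u • piMap α η (c (1 ⊗ₜ x)) := by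
        rw [← map_sum, ← map_sum, ← map_sum, ← TensorProduct.tmul_sum, sum_antipode_mul_eq_smul,
          TensorProduct.tmul_smul, map_smul, hln, map_smul, map_smul]

end Smash

theorem smash_pr4_general (R : H ⊗[k] U →ₗ[k] U ⊗[k] H)
    (hln : LeftNormal R)
    (hlm : LeftMult R) (hrm : RightMult R)
    (α : U →ₐ[k] B) (η : H →ₗ[k] B) (hη : IsPartialRep η)
    (hcompat : LinearMap.mul' k B ∘ₗ TensorProduct.map η α.toLinearMap =
      LinearMap.mul' k B ∘ₗ TensorProduct.map α.toLinearMap η ∘ₗ R) :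
    ∀ (v : U) (g : H),
      LinearMap.mulLeft k (piMap α η (v ⊗ₜ[k] g)) ∘ₗ
        LinearMap.mul' k B ∘ₗ
        TensorProduct.map
          (piMap α η ∘ₗ R ∘ₗ
            TensorProduct.map (HopfAlgebra.antipode (R := k) (A := H))
              (HopfAlgebra.antipode (R := k) (A := U)))
          (piMap α η ∘ₗ (TensorProduct.comm k H U).toLinearMap) ∘ₗ
        comulTP k H U =
      LinearMap.mul' k B ∘ₗ
        TensorProduct.map
          (piMap α η ∘ₗ smashMulLeft R v g ∘ₗ R ∘ₗ
            TensorProduct.map (HopfAlgebra.antipode (R := k) (A := H))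
              (HopfAlgebra.antipode (R := k) (A := U)))
          (piMap α η ∘ₗ (TensorProduct.comm k H U).toLinearMap) ∘ₗ
        comulTP k H U := by
  intro v g
  refine TensorProduct.ext' fun h u => ?_
  have r : Repr k h (H × H) := ℛ k h
  have s : Repr k u (U × U) := ℛ k u
  have collapse := sum_piMap_apply_antipode_mul hln hrm hcompat (α := α) (η := η) (r := s)
  have collapse_left : ∀ x, ∑ j ∈ s.index, piMap α η (R (x ⊗ₜ antipode k (s.left j))) * α (s.right j) =
      counit (R := k) u • η x := fun x => by
    simpa only [LinearMap.id_apply, piMap_tmul, map_one, one_mul]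
      using collapse LinearMap.id (fun _ _ => rfl) x
  have collapse_right : ∀ x, ∑ j ∈ s.index,
      piMap α η (smashMul R (v ⊗ₜ g) (R (x ⊗ₜ antipode k (s.left j)))) * α (s.right j) =
        counit (R := k) u • (α v * η (g * x)) := fun x => by
    rw [collapse _ fun _ _ => (smashMul_assoc hlm hrm _ _ _).symm, smashMul_tmul_one_tmul hln,
      piMap_tmul]
  simp only [LinearMap.comp_apply, comulTP_tmul r s, map_sum, map_tmul, LinearMap.mul'_apply,
    LinearMap.mulLeft_apply, LinearEquiv.coe_coe, TensorProduct.comm_tmul, piMap_tmul,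
    smashMulLeft_eq, ← mul_assoc, ← Finset.sum_mul, collapse_left, collapse_right]
  simp only [mul_smul_comm, smul_mul_assoc, ← Finset.smul_sum, mul_assoc]
  rw [← Finset.mul_sum, ← Finset.mul_sum, ← Finset.mul_sum, hη.mul_sum_antipode_mul]

/-- STATEMENT 19: let `R : H ⊗ U → U ⊗ H` be a normal, multiplicative coalgebra map,
`α : U → B` an algebra homomorphism and `η : H → B` a partial representation such that
`η(h)α(u) = α(u^R)η(h^R)` for all `u, h`. Let `π(u ⊗ h) = α(u)η(h)`. Then for all
`v ∈ U`, `g ∈ H` (and with `u ⊗ h` the varying argument):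
`π(v ⊗ g)·π(S_U(u₍₁₎)^R ⊗ S_H(h₍₁₎)^R)·π(u₍₂₎ ⊗ h₍₂₎)
  = π(v·S_U(u₍₁₎)^{Rr} ⊗ g^r·S_H(h₍₁₎)^R)·π(u₍₂₎ ⊗ h₍₂₎)`,
which is axiom (PR4) of a partial representation for the smash product `U #_R H`. -/
theorem smash_pr4 (R : H ⊗[k] U →ₗ[k] U ⊗[k] H)
    (hln : LeftNormal R) (hrn : RightNormal R)
    (hlm : LeftMult R) (hrm : RightMult R) (hcm : IsCoalgMap R)
    (α : U →ₐ[k] B) (η : H →ₗ[k] B) (hη : IsPartialRep η)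
    (hcompat : LinearMap.mul' k B ∘ₗ TensorProduct.map η α.toLinearMap =
      LinearMap.mul' k B ∘ₗ TensorProduct.map α.toLinearMap η ∘ₗ R) :
    ∀ (v : U) (g : H),
      LinearMap.mulLeft k (piMap α η (v ⊗ₜ[k] g)) ∘ₗ
        LinearMap.mul' k B ∘ₗ
        TensorProduct.map
          (piMap α η ∘ₗ R ∘ₗ
            TensorProduct.map (HopfAlgebra.antipode (R := k) (A := H))
              (HopfAlgebra.antipode (R := k) (A := U)))
          (piMap α η ∘ₗ (TensorProduct.comm k H U).toLinearMap) ∘ₗ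
        comulTP k H U =
      LinearMap.mul' k B ∘ₗ
        TensorProduct.map
          (piMap α η ∘ₗ smashMulLeft R v g ∘ₗ R ∘ₗ
            TensorProduct.map (HopfAlgebra.antipode (R := k) (A := H))
              (HopfAlgebra.antipode (R := k) (A := U)))
          (piMap α η ∘ₗ (TensorProduct.comm k H U).toLinearMap) ∘ₗ
        comulTP k H U :=
  smash_pr4_general R hln hlm hrm α η hη hcompat
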